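/- arXiv:math/0607043 — 2 statements merged into one kernel-verified Lean document; each statement's English description precedes it below -/
import Mathlib

section
/- (Dubuc) Let $G$ be a comonad on $\mathcal{A}$ and $L : \mathcal{B} \to \mathcal{A}$ a functor with right adjoint $R$. Then there is a bijective correspondence between functors $K : \mathcal{B} \to \mathcal{A}^G$ satisfying $U \circ K = L$ (where $U$ is the forgetful functor from $G$-coalgebras) and morphisms of comonads $\varphi : LR \to G$. -/
/-!
A functor `K : B ⥤ G.Coalgebra` lifting `L` is the same thing as a natural coaction
`γ : L ⟶ L ⋙ G` satisfying the counit and coassociativity laws, i.e. a `G`-coalgebra structure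
on the functor `L`. Such coactions correspond to comonad morphisms `φ : LR ⟶ G` by transposition
across `L ⊣ R`: `φ = γR ≫ Gε` and `γ = Lη ≫ φL`. The triangle identities make the two
transpositions mutually inverse, and under them the comonad-morphism laws of `φ` match the
coalgebra laws of `γ`.
-/

open CategoryTheory

namespace CategoryTheory.Comonad

variable {A B : Type*} [Category A] [Category B]

@[ext]
structure CoalgebraStructure (G : Comonad A) (L : B ⥤ A) where
  coact : L ⟶ L ⋙ G
  counit : ∀ b, coact.app b ≫ G.ε.app (L.obj b) = 𝟙 (L.obj b)
  coassoc : ∀ b, coact.app b ≫ G.δ.app (L.obj b) = coact.app b ≫ G.map (coact.app b)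

namespace CoalgebraStructure

variable {G : Comonad A} {L : B ⥤ A}

def lift (c : G.CoalgebraStructure L) : B ⥤ G.Coalgebra where
  obj b :=
    { A := L.obj b
      a := c.coact.app b
      counit := c.counit b
      coassoc := c.coassoc b }
  map f :=
    { f := L.map f
      h := (c.coact.naturality f).symm }

def ofLift (K : B ⥤ G.Coalgebra) : G.CoalgebraStructure (K ⋙ G.forget) where
  coact :=
    { app b := (K.obj b).a
      naturality _ _ f := (K.map f).h.symm }
  counit b := (K.obj b).counit
  coassoc b := (K.obj b).coassoc

def map {T₁ T₂ : Comonad A} (c : T₁.CoalgebraStructure L) (φ : T₁ ⟶ T₂) :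
    T₂.CoalgebraStructure L where
  coact := c.coact ≫ Functor.whiskerLeft L φ.toNatTrans
  counit b := by simp [c.counit]
  coassoc b := by
    simp only [NatTrans.comp_app, Functor.whiskerLeft_app, Category.assoc, ComonadHom.app_δ,
      Functor.map_comp]
    rw [reassoc_of% (c.coassoc b), ← φ.naturality_assoc]
    rfl

end CoalgebraStructure

-- Both round trips hold definitionally, by eta for structures.
def liftsEquivCoalgebraStructure {G : Comonad A} {L : B ⥤ A} :
    { K : B ⥤ G.Coalgebra // K ⋙ G.forget = L } ≃ G.CoalgebraStructure L where
  toFun K := by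
    obtain ⟨K, rfl⟩ := K
    exact CoalgebraStructure.ofLift K
  invFun c := ⟨c.lift, rfl⟩
  left_inv := by
    rintro ⟨K, rfl⟩
    rfl
  right_inv _ := rfl

end CategoryTheory.Comonad

namespace CategoryTheory.Adjunction

variable {A B : Type*} [Category A] [Category B] {L : B ⥤ A} {R : A ⥤ B} (adj : L ⊣ R)

def coalgebraStructure : adj.toComonad.CoalgebraStructure L where
  coact := Functor.whiskerRight adj.unit L
  counit b := adj.left_triangle_components b
  coassoc b := by
    dsimp only [toComonad, Functor.comp_obj, Functor.comp_map, Functor.id_obj,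
      Functor.whiskerRight_app, Functor.whiskerLeft_app]
    rw [← L.map_comp, ← L.map_comp, adj.unit_naturality]

variable {G : Comonad A}

def comonadHomOfCoalgebraStructure (c : G.CoalgebraStructure L) : adj.toComonad ⟶ G where
  app X := c.coact.app (R.obj X) ≫ G.map (adj.counit.app X)
  naturality X Y f := by
    dsimp only [toComonad, Functor.comp_obj, Functor.comp_map]
    rw [reassoc_of% (c.coact.naturality (R.map f))]
    simp only [Category.assoc, ← G.map_comp, adj.counit_naturality]
  app_ε X := by
    dsimp only [toComonad]
    rw [Category.assoc, G.ε.naturality, reassoc_of% (c.counit (R.obj X)), Functor.id_map]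
  app_δ X := by
    dsimp only [toComonad, Functor.comp_obj, Functor.whiskerRight_app, Functor.whiskerLeft_app]
    simp only [Category.assoc]
    rw [G.δ.naturality, reassoc_of% (c.coassoc _),
      reassoc_of% (c.coact.naturality (adj.unit.app (R.obj X)))]
    simp only [Functor.comp_map, Functor.map_comp]
    rw [← G.map_comp_assoc, adj.left_triangle_components, G.map_id, Category.id_comp]

lemma unit_comp_coact_comp_counit (c : G.CoalgebraStructure L) (b : B) :
    L.map (adj.unit.app b) ≫ c.coact.app (R.obj (L.obj b)) ≫ G.map (adj.counit.app (L.obj b)) =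
      c.coact.app b := by
  rw [reassoc_of% (c.coact.naturality (adj.unit.app b)), ← G.map_comp,
    adj.left_triangle_components, G.map_id, Category.comp_id]

lemma unit_comp_app_comp_counit {F : A ⥤ A} (φ : R ⋙ L ⟶ F) (X : A) :
    L.map (adj.unit.app (R.obj X)) ≫ φ.app (L.obj (R.obj X)) ≫ F.map (adj.counit.app X) =
      φ.app X := by
  rw [← φ.naturality, Functor.comp_map, ← L.map_comp_assoc, adj.right_triangle_components]
  exact (congrArg (· ≫ _) (L.map_id _)).trans (Category.id_comp _)

def coalgebraStructureEquivComonadHom : G.CoalgebraStructure L ≃ (adj.toComonad ⟶ G) where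
  toFun := adj.comonadHomOfCoalgebraStructure
  invFun φ := adj.coalgebraStructure.map φ
  left_inv c := by
    ext b
    exact adj.unit_comp_coact_comp_counit c b
  right_inv φ := by
    ext X
    exact (Category.assoc _ _ _).trans (adj.unit_comp_app_comp_counit φ.toNatTrans X)

end CategoryTheory.Adjunction

/-- Dubuc: given a comonad `G` on `A` and a functor `L : B ⥤ A` with a right
adjoint `R`, there is a bijective correspondence between functors `K : B ⥤ A^G` with
`U ∘ K = L` (where `U` is the forgetful functor from `G`-coalgebras) and morphisms of
comonads `φ : LR ⟶ G` (where `LR` carries the comonad structure of the adjunction). -/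
theorem stmt5 {A : Type*} {B : Type*} [Category A] [Category B]
    (G : Comonad A) (L : B ⥤ A) (R : A ⥤ B) (adj : L ⊣ R) :
    Nonempty ({ K : B ⥤ G.Coalgebra // K ⋙ G.forget = L } ≃ (adj.toComonad ⟶ G)) :=
  ⟨Comonad.liftsEquivCoalgebraStructure.trans adj.coalgebraStructureEquivComonadHom⟩
end

section
/- In the setting of the adjunction $K_\varphi \dashv D_\varphi$ (where $D_\varphi X$ is the equalizer $eq_X : D_\varphi X \to RX$ of $\alpha_X$ and $Rx$), the counit of the adjunction at a $G$-coalgebra $(X,x)$ is given by $\widehat{\epsilon}_X = \epsilon_X \circ L(eq_X) : LD_\varphi X \to X$, and this morphism is a homomorphism of $G$-coalgebras from $K_\varphi D_\varphi X$ to $(X,x)$. -/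
/-!
A morphism of coalgebras `K_φ Y ⟶ (X, x)` is a map `f : LY ⟶ X` with
`(Lη_Y ≫ φ_{LY}) ≫ Gf = f ≫ x`. Along `L ⊣ R` the two sides transpose to `f^♭ ≫ α_X` and
`f^♭ ≫ Rx` (naturality of `α` and of `η`), so coalgebra maps `K_φ Y ⟶ X` correspond, naturally in
`Y`, to maps `Y ⟶ RX` equalizing `α_X` and `Rx`, i.e. to maps `Y ⟶ D_φ X`. Hence `K_φ ⊣ D_φ`,
and the counit at `X`, which corresponds to the identity of `D_φ X`, is the transpose
`ε_X ∘ L(eq_X)` of `eq_X`; as a component of the counit it is a coalgebra morphism.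
-/

open CategoryTheory CategoryTheory.Limits

namespace CategoryTheory.Comonad

variable {C : Type*} [Category C]

@[simps]
def coalgebraFunctorOfComonadHom {G₁ G₂ : Comonad C} (φ : G₁ ⟶ G₂) :
    Coalgebra G₁ ⥤ Coalgebra G₂ where
  obj X :=
    { A := X.A
      a := X.a ≫ φ.app X.A
      counit := by simp [X.counit]
      coassoc := by simp [X.coassoc_assoc] }
  map f :=
    { f := f.f
      h := by
        dsimp
        rw [Category.assoc, ← φ.naturality, f.h_assoc] }

lemma Coalgebra.ext_of_heq {G : Comonad C} {X Y : Coalgebra G} (hA : X.A = Y.A)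
    (ha : HEq X.a Y.a) : X = Y := by
  cases X; cases Y
  subst hA
  cases eq_of_heq ha
  rfl

lemma Coalgebra.Hom.heq_of_heq_f {G : Comonad C} {X X' Y Y' : Coalgebra G} (hX : X = X')
    (hY : Y = Y') {f : X ⟶ Y} {g : X' ⟶ Y'} (h : HEq f.f g.f) : HEq f g := by
  subst hX hY
  exact heq_of_eq (Coalgebra.Hom.ext (eq_of_heq h))

end CategoryTheory.Comonad

namespace CategoryTheory.Adjunction

variable {A B : Type*} [Category A] [Category B] {G : Comonad A} {L : B ⥤ A} {R : A ⥤ B}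
  (adj : L ⊣ R) (φ : adj.toComonad ⟶ G)

def coalgebraComparison : B ⥤ G.Coalgebra :=
  Comonad.comparison adj ⋙ Comonad.coalgebraFunctorOfComonadHom φ

/-- Reducible, so that instances stated for `adj.unit.app (R.obj X) ≫ R.map (φ.app X)` apply to
`(adj.comonadHomTranspose φ).app X`. -/
abbrev comonadHomTranspose : R ⟶ G.toFunctor ⋙ R where
  app X := adj.unit.app (R.obj X) ≫ R.map (φ.app X)
  naturality X Y f := by
    have hφ : L.map (R.map f) ≫ φ.app Y = φ.app X ≫ G.map f := φ.naturality f
    dsimp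
    erw [← adj.unit_naturality_assoc, ← R.map_comp, hφ, R.map_comp, Category.assoc]

lemma homEquiv_comp_comonadHomTranspose_app (Y : B) (X : A) (f : L.obj Y ⟶ X) :
    adj.homEquiv Y X f ≫ (adj.comonadHomTranspose φ).app X =
      adj.homEquiv Y (G.obj X) ((L.map (adj.unit.app Y) ≫ φ.app (L.obj Y)) ≫ G.map f) := by
  rw [homEquiv_unit, homEquiv_unit, Category.assoc, (adj.comonadHomTranspose φ).naturality f]
  dsimp
  simp only [Category.assoc, Functor.map_comp]
  erw [← adj.unit_naturality_assoc, R.map_comp, Category.assoc]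

lemma comp_map_eq_iff_homEquiv_fork (Y : B) {X : A} (x : X ⟶ G.obj X) (f : L.obj Y ⟶ X) :
    (L.map (adj.unit.app Y) ≫ φ.app (L.obj Y)) ≫ G.map f = f ≫ x ↔
      adj.homEquiv Y X f ≫ (adj.comonadHomTranspose φ).app X = adj.homEquiv Y X f ≫ R.map x := by
  rw [homEquiv_comp_comonadHomTranspose_app, ← homEquiv_naturality_right,
    (adj.homEquiv _ _).apply_eq_iff_eq]

def coalgebraComparisonHomEquivFork (Y : B) (X : G.Coalgebra) :
    ((adj.coalgebraComparison φ).obj Y ⟶ X) ≃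
      { g : Y ⟶ R.obj X.A // g ≫ (adj.comonadHomTranspose φ).app X.A = g ≫ R.map X.a } where
  toFun f := ⟨adj.homEquiv Y X.A f.f, (adj.comp_map_eq_iff_homEquiv_fork φ Y X.a f.f).1 f.h⟩
  invFun g :=
    { f := (adj.homEquiv Y X.A).symm g.1
      h := (adj.comp_map_eq_iff_homEquiv_fork φ Y X.a _).2 (by simpa using g.2) }
  left_inv f := by ext; exact (adj.homEquiv _ _).symm_apply_apply _
  right_inv g := by ext; simp

variable [∀ X : G.Coalgebra, HasEqualizer ((adj.comonadHomTranspose φ).app X.A) (R.map X.a)]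

noncomputable def coalgebraComparisonHomEquiv (Y : B) (X : G.Coalgebra) :
    ((adj.coalgebraComparison φ).obj Y ⟶ X) ≃
      (Y ⟶ equalizer ((adj.comonadHomTranspose φ).app X.A) (R.map X.a)) :=
  (adj.coalgebraComparisonHomEquivFork φ Y X).trans
    (Fork.IsLimit.homIso (equalizerIsEqualizer _ _) Y).symm

@[simp]
lemma coalgebraComparisonHomEquiv_apply_ι {Y : B} {X : G.Coalgebra}
    (f : (adj.coalgebraComparison φ).obj Y ⟶ X) :
    adj.coalgebraComparisonHomEquiv φ Y X f ≫ equalizer.ι _ _ = adj.homEquiv Y X.A f.f :=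
  congrArg Subtype.val
    ((Fork.IsLimit.homIso (equalizerIsEqualizer _ _) Y).apply_symm_apply
      (adj.coalgebraComparisonHomEquivFork φ Y X f))

lemma coalgebraComparisonHomEquiv_symm_apply_f {Y : B} {X : G.Coalgebra}
    (g : Y ⟶ equalizer ((adj.comonadHomTranspose φ).app X.A) (R.map X.a)) :
    ((adj.coalgebraComparisonHomEquiv φ Y X).symm g).f =
      (adj.homEquiv Y X.A).symm (g ≫ equalizer.ι _ _) :=
  (Equiv.eq_symm_apply _).2 <| (adj.coalgebraComparisonHomEquiv_apply_ι φ _).symm.trans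
    (congrArg (· ≫ equalizer.ι _ _) (Equiv.apply_symm_apply _ g))

lemma coalgebraComparisonHomEquiv_naturality_left {Y' Y : B} (X : G.Coalgebra) (f : Y' ⟶ Y)
    (g : (adj.coalgebraComparison φ).obj Y ⟶ X) :
    adj.coalgebraComparisonHomEquiv φ Y' X ((adj.coalgebraComparison φ).map f ≫ g) =
      f ≫ adj.coalgebraComparisonHomEquiv φ Y X g := by
  apply equalizer.hom_ext
  rw [Category.assoc, coalgebraComparisonHomEquiv_apply_ι, coalgebraComparisonHomEquiv_apply_ι]
  exact adj.homEquiv_naturality_left f g.f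

noncomputable def coalgebraComparisonRightAdjoint : G.Coalgebra ⥤ B :=
  rightAdjointOfEquiv
    (G_obj := fun X => equalizer ((adj.comonadHomTranspose φ).app X.A) (R.map X.a))
    (adj.coalgebraComparisonHomEquiv φ)
    fun _ _ X f g => adj.coalgebraComparisonHomEquiv_naturality_left φ X f g

noncomputable def coalgebraComparisonAdjunction :
    adj.coalgebraComparison φ ⊣ adj.coalgebraComparisonRightAdjoint φ :=
  adjunctionOfEquivRight _ _

lemma coalgebraComparisonAdjunction_counit_app_f (X : G.Coalgebra) :
    ((adj.coalgebraComparisonAdjunction φ).counit.app X).f =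
      L.map (equalizer.ι ((adj.comonadHomTranspose φ).app X.A) (R.map X.a)) ≫
        adj.counit.app X.A := by
  simp only [coalgebraComparisonAdjunction, adjunctionOfEquivRight_counit_app]
  rw [coalgebraComparisonHomEquiv_symm_apply_f, Category.id_comp, homEquiv_counit]

end CategoryTheory.Adjunction

/-- in the setting of the adjunction `K_φ ⊣ D_φ`, where `D_φ X` is the equalizer
`eq_X : D_φ X ⟶ RX` of `α_X` and `Rx`, the counit of the adjunction at a `G`-coalgebra
`(X, x)` is given by `ε̂_X = ϵ_X ∘ L(eq_X) : L(D_φ X) ⟶ X`, and this morphism is a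
homomorphism of `G`-coalgebras from `K_φ D_φ X` (with coaction `β_{D_φ X}`) to `(X, x)`. -/
theorem stmt7 {A : Type*} {B : Type*} [Category A] [Category B]
    (G : Comonad A) (L : B ⥤ A) (R : A ⥤ B) (adj : L ⊣ R)
    (φ : adj.toComonad ⟶ G)
    (K : B ⥤ G.Coalgebra)
    (hK : K ⋙ G.forget = L)
    (hKa : ∀ Y : B, HEq (K.obj Y).a (L.map (adj.unit.app Y) ≫ φ.app (L.obj Y)))
    (hKf : ∀ Y Z : B, ∀ f : Y ⟶ Z, HEq (K.map f).f (L.map f))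
    (heq : ∀ X : G.Coalgebra,
      HasEqualizer (adj.unit.app (R.obj X.A) ≫ R.map (φ.app X.A)) (R.map X.a)) :
    (∃ (D : G.Coalgebra ⥤ B)
        (hobj : ∀ X : G.Coalgebra,
          D.obj X = equalizer (adj.unit.app (R.obj X.A) ≫ R.map (φ.app X.A)) (R.map X.a))
        (adj2 : K ⊣ D),
      ∀ X : G.Coalgebra,
        HEq (adj2.counit.app X).f
          (L.map (eqToHom (hobj X) ≫
              equalizer.ι (adj.unit.app (R.obj X.A) ≫ R.map (φ.app X.A)) (R.map X.a)) ≫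
            adj.counit.app X.A)) ∧
    (∀ X : G.Coalgebra,
      (L.map (adj.unit.app
            (equalizer (adj.unit.app (R.obj X.A) ≫ R.map (φ.app X.A)) (R.map X.a))) ≫
          φ.app (L.obj (equalizer (adj.unit.app (R.obj X.A) ≫ R.map (φ.app X.A))
            (R.map X.a)))) ≫
        G.map (L.map (equalizer.ι (adj.unit.app (R.obj X.A) ≫ R.map (φ.app X.A))
            (R.map X.a)) ≫ adj.counit.app X.A) =
      (L.map (equalizer.ι (adj.unit.app (R.obj X.A) ≫ R.map (φ.app X.A)) (R.map X.a)) ≫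
        adj.counit.app X.A) ≫ X.a) := by
  have hKobj (Y : B) : K.obj Y = (adj.coalgebraComparison φ).obj Y :=
    Comonad.Coalgebra.ext_of_heq (congrArg (·.obj Y) hK) (hKa Y)
  obtain rfl : K = adj.coalgebraComparison φ :=
    Functor.hext hKobj fun Y Z f =>
      Comonad.Coalgebra.Hom.heq_of_heq_f (hKobj Y) (hKobj Z) (hKf Y Z f)
  refine ⟨⟨adj.coalgebraComparisonRightAdjoint φ, fun _ => rfl,
    adj.coalgebraComparisonAdjunction φ, fun X => heq_of_eq ?_⟩, fun X => ?_⟩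
  · rw [adj.coalgebraComparisonAdjunction_counit_app_f φ X]
    erw [eqToHom_refl, Category.id_comp]
    rfl
  · have hcounit := ((adj.coalgebraComparisonAdjunction φ).counit.app X).h
    rw [adj.coalgebraComparisonAdjunction_counit_app_f φ X] at hcounit
    exact hcounit
end
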